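/- Let θ = Δ₁₃ + Δ₂₂ + Δ₃₁ and let φ be the automorphism of M³₀₁ given by φ(e₁) = a·e₁ + b·e₂ + c·e₃, φ(e₂) = a²·e₂ + 2ab·e₃, φ(e₃) = a³·e₃ with a ≠ 0. Then the transported cocycle φθ, defined by (φθ)(x,y) = θ(φ(x),φ(y)), satisfies φθ = β₁Δ₁₁ + β₂(Δ₁₂ + Δ₂₁) + a⁴(Δ₁₃ + Δ₂₂ + Δ₃₁) for some β₁, β₂ ∈ ℂ; equivalently, φθ − a⁴θ lies in the span of Δ₁₁ and Δ₁₂ + Δ₂₁. -/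

import Mathlib

/-- The multiplication of the algebra `M³₀₁` on `ℂ³` (basis `e₁ = coord 0`, `e₂ = coord 1`,
`e₃ = coord 2`), determined bilinearly by `e₁e₁ = e₂`, `e₁e₂ = e₃`, `e₂e₁ = e₃`. -/
def m301mul (x y : Fin 3 → ℂ) : Fin 3 → ℂ :=
  ![0, x 0 * y 0, x 0 * y 1 + x 1 * y 0]

/-- The bilinear form `Δᵢⱼ` on `ℂ³` with `Δᵢⱼ(e_l, e_k) = δᵢl·δⱼk`. -/
noncomputable def delta3 (i j : Fin 3) : (Fin 3 → ℂ) →ₗ[ℂ] (Fin 3 → ℂ) →ₗ[ℂ] ℂ :=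
  LinearMap.mk₂ ℂ (fun x y => x i * y j)
    (fun m₁ m₂ n => by simp [add_mul])
    (fun c m n => by simp only [Pi.smul_apply, smul_eq_mul]; ring)
    (fun m n₁ n₂ => by simp [mul_add])
    (fun c m n => by simp only [Pi.smul_apply, smul_eq_mul]; ring)

/-- The basis vector `e₁` of `M³₀₁`. -/
def E1 : Fin 3 → ℂ := ![1, 0, 0]
/-- The basis vector `e₂` of `M³₀₁`. -/
def E2 : Fin 3 → ℂ := ![0, 1, 0]
/-- The basis vector `e₃` of `M³₀₁`. -/
def E3 : Fin 3 → ℂ := ![0, 0, 1]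

theorem delta3_apply (i j : Fin 3) (x y : Fin 3 → ℂ) : delta3 i j x y = x i * y j := rfl

theorem eq_smul_E1_add_smul_E2_add_smul_E3 (z : Fin 3 → ℂ) :
    z = z 0 • E1 + z 1 • E2 + z 2 • E3 := by
  funext i
  fin_cases i <;> simp [E1, E2, E3]

theorem LinearMap.apply_eq_smul_E1_add_smul_E2_add_smul_E3 {M : Type*} [AddCommMonoid M]
    [Module ℂ M] (f : (Fin 3 → ℂ) →ₗ[ℂ] M) (z : Fin 3 → ℂ) :
    f z = z 0 • f E1 + z 1 • f E2 + z 2 • f E3 := by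
  conv_lhs => rw [eq_smul_E1_add_smul_E2_add_smul_E3 z]
  simp only [map_add, map_smul]

theorem apply_eq_of_apply_E1_E2_E3 {a b c : ℂ} {φ : (Fin 3 → ℂ) →ₗ[ℂ] (Fin 3 → ℂ)}
    (h1 : φ E1 = a • E1 + b • E2 + c • E3)
    (h2 : φ E2 = a ^ 2 • E2 + (2 * a * b) • E3)
    (h3 : φ E3 = a ^ 3 • E3) (z : Fin 3 → ℂ) :
    φ z = ![a * z 0, b * z 0 + a ^ 2 * z 1, c * z 0 + 2 * a * b * z 1 + a ^ 3 * z 2] := by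
  rw [φ.apply_eq_smul_E1_add_smul_E2_add_smul_E3, h1, h2, h3]
  funext i
  fin_cases i <;> simp [E1, E2, E3] <;> ring

theorem m301_transported_cocycle_general (a b c : ℂ)
    (φ : (Fin 3 → ℂ) →ₗ[ℂ] (Fin 3 → ℂ))
    (h1 : φ E1 = a • E1 + b • E2 + c • E3)
    (h2 : φ E2 = a ^ 2 • E2 + (2 * a * b) • E3)
    (h3 : φ E3 = a ^ 3 • E3) :
    ∃ β₁ β₂ : ℂ, ∀ x y,
      (delta3 0 2 + delta3 1 1 + delta3 2 0) (φ x) (φ y) =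
        (β₁ • delta3 0 0 + β₂ • (delta3 0 1 + delta3 1 0) +
          a ^ 4 • (delta3 0 2 + delta3 1 1 + delta3 2 0)) x y := by
  -- Expanding θ(φx, φy), the monomials x₀y₂, x₁y₁, x₂y₀ get coefficient a⁴, and the only others
  -- are x₀y₀ (coefficient 2ac + b²) and x₀y₁, x₁y₀ (coefficient 3a²b).
  refine ⟨2 * a * c + b ^ 2, 3 * a ^ 2 * b, fun x y => ?_⟩
  simp only [LinearMap.add_apply, LinearMap.smul_apply, delta3_apply, smul_eq_mul,
    apply_eq_of_apply_E1_E2_E3 h1 h2 h3, Matrix.cons_val_zero, Matrix.cons_val_one, Matrix.cons_val_two,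
    Matrix.head_cons, Matrix.tail_cons]
  ring

/-- For the cocycle `θ = Δ₁₃ + Δ₂₂ + Δ₃₁` and an automorphism `φ` of `M³₀₁` given by
`φ(e₁) = a e₁ + b e₂ + c e₃`, `φ(e₂) = a² e₂ + 2ab e₃`, `φ(e₃) = a³ e₃` with `a ≠ 0`,
the transported cocycle `(φθ)(x,y) = θ(φ x, φ y)` equals
`β₁Δ₁₁ + β₂(Δ₁₂ + Δ₂₁) + a⁴(Δ₁₃ + Δ₂₂ + Δ₃₁)` for some `β₁, β₂ ∈ ℂ`. -/
theorem m301_transported_cocycle (a b c : ℂ) (ha : a ≠ 0)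
    (φ : (Fin 3 → ℂ) →ₗ[ℂ] (Fin 3 → ℂ))
    (h1 : φ E1 = a • E1 + b • E2 + c • E3)
    (h2 : φ E2 = a ^ 2 • E2 + (2 * a * b) • E3)
    (h3 : φ E3 = a ^ 3 • E3) :
    ∃ β₁ β₂ : ℂ, ∀ x y,
      (delta3 0 2 + delta3 1 1 + delta3 2 0) (φ x) (φ y) =
        (β₁ • delta3 0 0 + β₂ • (delta3 0 1 + delta3 1 0) +
          a ^ 4 • (delta3 0 2 + delta3 1 1 + delta3 2 0)) x y :=
  m301_transported_cocycle_general a b c φ h1 h2 h3
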